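/- arXiv:2601.17766 — 5 statements merged into one kernel-verified Lean document; each statement's English description precedes it below -/
import Mathlib

section
/- Let L_• : V → F[T] be a stratification. Then the family (L_v(T)^{-1})_{v ∈ V} of formal power series is multipliable in F[[T]] equipped with the coefficient-wise (product) topology, and its product L(T) := ∏_{v ∈ V} L_v(T)^{-1} has constant coefficient 1. -/
/-- `stratSet L i` is the set `V_i` of indices `v` such that the coefficient of `T^i` in
`L v` is nonzero while all coefficients of `T^j` for `1 ≤ j < i` vanish. -/
def stratSet {F V : Type*} [Field F] (L : V → Polynomial F) (i : ℕ) : Set V :=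
  {v | (L v).coeff i ≠ 0 ∧ ∀ j : ℕ, 1 ≤ j → j < i → (L v).coeff j = 0}

private lemma aux_prod_sub_one_dvd {F ι : Type*} [Field F] {N : ℕ} (s : Finset ι)
    (g : ι → PowerSeries F) (h : ∀ v ∈ s, (PowerSeries.X : PowerSeries F) ^ N ∣ (g v - 1)) :
    (PowerSeries.X : PowerSeries F) ^ N ∣ ((∏ v ∈ s, g v) - 1) := by
  classical
  induction s using Finset.cons_induction with
  | empty => simp
  | cons a s ha ih =>
    rw [Finset.prod_cons]
    have h1 := h a (Finset.mem_cons_self a s)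
    have h2 := ih fun v hv => h v (Finset.mem_cons_of_mem hv)
    have key : g a * ∏ v ∈ s, g v - 1 = g a * ((∏ v ∈ s, g v) - 1) + (g a - 1) := by ring
    rw [key]
    exact dvd_add (Dvd.dvd.mul_left h2 _) h1

/-- If `L : V → F[T]` is a stratification (each `L v` has constant coefficient `1` and each
`V_i` for `i ≥ 1` is finite), then the family `(L v)⁻¹` of formal power series is multipliable
in `F[[T]]` with the coefficient-wise (product) topology, and the constant coefficient of the
product `∏_v (L v)⁻¹` equals `1`. -/
theorem stratification_multipliable_and_constantCoeff_tprod_eq_one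
    {F V : Type*} [Field F] (L : V → Polynomial F)
    (hconst : ∀ v, (L v).coeff 0 = 1)
    (hstrat : ∀ i : ℕ, 1 ≤ i → (stratSet L i).Finite) :
    letI : TopologicalSpace F := ⊥
    letI : TopologicalSpace (PowerSeries F) := Pi.topologicalSpace
    Multipliable (fun v : V => (↑(L v) : PowerSeries F)⁻¹) ∧
      PowerSeries.constantCoeff (∏' v : V, (↑(L v) : PowerSeries F)⁻¹) = 1 := by
  classical
  letI : TopologicalSpace F := ⊥
  letI : TopologicalSpace (PowerSeries F) := Pi.topologicalSpace
  haveI : DiscreteTopology F := ⟨rfl⟩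
  haveI : T2Space (PowerSeries F) := Pi.t2Space
  set f : V → PowerSeries F := fun v => (↑(L v) : PowerSeries F)⁻¹ with hf
  -- constant coefficients
  have hc : ∀ v, PowerSeries.constantCoeff (↑(L v) : PowerSeries F) = 1 := by
    intro v
    rw [← PowerSeries.coeff_zero_eq_constantCoeff_apply, Polynomial.coeff_coe]
    exact hconst v
  have hcne : ∀ v, PowerSeries.constantCoeff (↑(L v) : PowerSeries F) ≠ 0 := by
    intro v; rw [hc v]; exact one_ne_zero
  -- divisibility for indices outside the strata
  have hdvd : ∀ (n : ℕ) (v : V), (∀ j, 1 ≤ j → j ≤ n → (L v).coeff j = 0) →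
      (PowerSeries.X : PowerSeries F) ^ (n + 1) ∣ (f v - 1) := by
    intro n v hv
    have h1 : (PowerSeries.X : PowerSeries F) ^ (n + 1) ∣ (1 - (↑(L v) : PowerSeries F)) := by
      rw [PowerSeries.X_pow_dvd_iff]
      intro m hm
      rw [map_sub, Polynomial.coeff_coe]
      rcases Nat.eq_zero_or_pos m with hm0 | hm0
      · subst hm0; simp [hconst v]
      · have : (L v).coeff m = 0 := hv m hm0 (Nat.lt_succ_iff.mp hm)
        simp [this, PowerSeries.coeff_one, Nat.pos_iff_ne_zero.mp hm0]
    have key : f v - 1 = f v * (1 - (↑(L v) : PowerSeries F)) := by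
      rw [mul_sub, mul_one, hf]
      rw [PowerSeries.inv_mul_cancel _ (hcne v)]
    rw [key]
    exact Dvd.dvd.mul_left h1 _
  -- the finite strata sets
  have hSfin : ∀ n : ℕ, (⋃ i ∈ Set.Icc 1 n, stratSet L i).Finite := fun n =>
    Set.Finite.biUnion (Set.finite_Icc 1 n) fun i hi => hstrat i hi.1
  set S : ℕ → Finset V := fun n => (hSfin n).toFinset with hS
  have hmemS : ∀ n v, v ∈ S n ↔ ∃ i, 1 ≤ i ∧ i ≤ n ∧ v ∈ stratSet L i := by
    intro n v
    rw [hS]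
    simp only [Set.Finite.mem_toFinset, Set.mem_iUnion, Set.mem_Icc]
    constructor
    · rintro ⟨i, ⟨hi1, hi2⟩, hv⟩; exact ⟨i, hi1, hi2, hv⟩
    · rintro ⟨i, hi1, hi2, hv⟩; exact ⟨i, ⟨hi1, hi2⟩, hv⟩
  have hmono : ∀ {k n : ℕ}, k ≤ n → S k ⊆ S n := by
    intro k n hkn v hv
    rw [hmemS] at hv ⊢
    obtain ⟨i, h1, h2, h3⟩ := hv
    exact ⟨i, h1, h2.trans hkn, h3⟩
  -- outside S n, all low coefficients vanish
  have hnot : ∀ (n : ℕ) (v : V), v ∉ S n → ∀ j, 1 ≤ j → j ≤ n → (L v).coeff j = 0 := by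
    intro n v hv j hj1 hjn
    by_contra hne
    have hex : ∃ m, 1 ≤ m ∧ (L v).coeff m ≠ 0 := ⟨j, hj1, hne⟩
    set i := Nat.find hex with hi
    obtain ⟨hi1, hine⟩ := Nat.find_spec hex
    have hij : i ≤ j := Nat.find_min' hex ⟨hj1, hne⟩
    apply hv
    rw [hmemS]
    refine ⟨i, hi1, hij.trans hjn, hine, ?_⟩
    intro j' hj'1 hj'i
    by_contra hne'
    exact absurd ⟨hj'1, hne'⟩ (Nat.find_min hex hj'i)
  -- stability of coefficients
  have hA : ∀ (n : ℕ) (s : Finset V), S n ⊆ s → ∀ k, k ≤ n →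
      PowerSeries.coeff k (∏ v ∈ s, f v) = PowerSeries.coeff k (∏ v ∈ S n, f v) := by
    intro n s hsub k hk
    rw [← Finset.prod_sdiff hsub]
    have hdvd2 : (PowerSeries.X : PowerSeries F) ^ (n + 1) ∣ ((∏ v ∈ s \ S n, f v) - 1) := by
      apply aux_prod_sub_one_dvd
      intro v hv
      exact hdvd n v (hnot n v (Finset.mem_sdiff.mp hv).2)
    have key : (∏ v ∈ s \ S n, f v) * ∏ v ∈ S n, f v =
        (∏ v ∈ S n, f v) + ((∏ v ∈ s \ S n, f v) - 1) * ∏ v ∈ S n, f v := by ring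
    rw [key, map_add, PowerSeries.X_pow_dvd_iff.mp (Dvd.dvd.mul_right hdvd2 _) k
      (Nat.lt_succ_of_le hk), add_zero]
  -- the candidate limit
  set a : PowerSeries F := PowerSeries.mk (fun n => PowerSeries.coeff n (∏ v ∈ S n, f v))
    with ha
  have hB : ∀ n k, k ≤ n →
      PowerSeries.coeff k (∏ v ∈ S n, f v) = PowerSeries.coeff k a := by
    intro n k hk
    rw [ha, PowerSeries.coeff_mk]
    exact hA k (S n) (hmono hk) k le_rfl
  -- evaluation as coefficient
  have hcoe : ∀ (d : Unit →₀ ℕ) (g : PowerSeries F), g d = PowerSeries.coeff (d ()) g := by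
    intro d g
    have hd : Finsupp.single () (d ()) = d :=
      Finsupp.ext fun u => by cases u; exact Finsupp.single_eq_same
    show g d = MvPowerSeries.coeff (Finsupp.single () (d ())) g
    rw [hd, MvPowerSeries.coeff_apply]
  -- HasProd
  have hP : HasProd f a := by
    rw [HasProd, SummationFilter.unconditional_filter]; refine tendsto_pi_nhds.mpr ?_
    intro d
    rw [nhds_discrete, Filter.tendsto_pure, Filter.eventually_atTop]
    refine ⟨S (d ()), fun s hs => ?_⟩
    rw [hcoe d (∏ v ∈ s, f v), hcoe d a, hA (d ()) s hs (d ()) le_rfl, hB (d ()) (d ()) le_rfl]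
  have hM : Multipliable f := ⟨a, hP⟩
  refine ⟨hM, ?_⟩
  rw [hP.tprod_eq]
  have h0 : PowerSeries.constantCoeff a = PowerSeries.constantCoeff (∏ v ∈ S 0, f v) := by
    rw [← PowerSeries.coeff_zero_eq_constantCoeff_apply, ← PowerSeries.coeff_zero_eq_constantCoeff_apply]
    exact (hB 0 0 le_rfl).symm
  rw [h0, map_prod]
  apply Finset.prod_eq_one
  intro v _
  rw [hf, PowerSeries.constantCoeff_inv, hc v, inv_one]
end

section
/- Let L_• : V → F[T] be a stratification whose product L(T) := ∏_{v ∈ V} L_v(T)^{-1} satisfies L(T) = N(T)·D(T)^{-1} in F[[T]] for polynomials N(T), D(T) ∈ F[T] with constant coefficient 1. Then for every n₁ ∈ ℕ, N(T) ≡ D(T)·∏_{i=1}^{n₁} ∏_{v ∈ V_i} L_v(T)^{-1} (mod T^{n₁+1}) in F[[T]]; in particular, the coefficients of N(T) in degrees 0 through n₁ equal those of this finite product. -/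
section Aux

variable {F : Type*} [Field F]

/-- Congruence of power series modulo `T^(k+1)`. -/
def EqTrunc (k : ℕ) (a b : PowerSeries F) : Prop :=
  ∀ j ≤ k, PowerSeries.coeff j a = PowerSeries.coeff j b

theorem EqTrunc.refl {k : ℕ} (a : PowerSeries F) : EqTrunc k a a := fun _ _ => _root_.rfl

theorem EqTrunc.symm {k : ℕ} {a b : PowerSeries F} (h : EqTrunc k a b) : EqTrunc k b a :=
  fun j hj => (h j hj).symm

theorem EqTrunc.trans {k : ℕ} {a b c : PowerSeries F} (h : EqTrunc k a b) (h' : EqTrunc k b c) :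
    EqTrunc k a c := fun j hj => (h j hj).trans (h' j hj)

theorem EqTrunc.mul {k : ℕ} {a b c d : PowerSeries F} (h1 : EqTrunc k a b) (h2 : EqTrunc k c d) :
    EqTrunc k (a * c) (b * d) := by
  intro j hj
  rw [PowerSeries.coeff_mul, PowerSeries.coeff_mul]
  refine Finset.sum_congr _root_.rfl fun p hp => ?_
  replace hp := Finset.HasAntidiagonal.mem_antidiagonal.mp hp
  rw [h1 p.1 (by omega), h2 p.2 (by omega)]

theorem EqTrunc.prod_one {V : Type*} {k : ℕ} {s : Finset V} {f : V → PowerSeries F}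
    (h : ∀ v ∈ s, EqTrunc k (f v) 1) : EqTrunc k (∏ v ∈ s, f v) 1 := by
  refine Finset.prod_induction f (fun x => EqTrunc k x 1) (fun a b ha hb => ?_) (EqTrunc.refl 1) h
  simpa using ha.mul hb

theorem inv_eqTrunc_one {k : ℕ} (f : PowerSeries F) (h0 : PowerSeries.constantCoeff f = 1)
    (h : ∀ j : ℕ, 1 ≤ j → j ≤ k → PowerSeries.coeff j f = 0) : EqTrunc k f⁻¹ 1 := by
  have hE : EqTrunc k f 1 := by
    intro j hj
    rcases Nat.eq_zero_or_pos j with hj0 | hj0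
    · subst hj0; simpa using h0
    · rw [h j hj0 hj]
      rw [PowerSeries.coeff_one, if_neg (by omega)]
  have h1 : EqTrunc k (f⁻¹ * f) (f⁻¹ * 1) := (EqTrunc.refl f⁻¹).mul hE
  rw [PowerSeries.inv_mul_cancel f (by rw [h0]; exact one_ne_zero), mul_one] at h1
  exact h1.symm

end Aux

/-- Let `L : V → F[T]` be a stratification whose product `L(T) = ∏'_v (L v)⁻¹` in `F[[T]]`
(with the coefficient-wise topology) equals `N(T)·D(T)⁻¹` for polynomials `N, D` with constant
coefficient `1`. Then for every `n₁ : ℕ`,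
`N(T) ≡ D(T)·∏_{i=1}^{n₁} ∏_{v ∈ V_i} (L v)⁻¹ (mod T^(n₁+1))`; in particular the coefficients
of `N` in degrees `0` through `n₁` equal those of this finite product. -/
theorem coeff_numerator_eq_coeff_finite_prod
    {F V : Type*} [Field F] (L : V → Polynomial F)
    (hconst : ∀ v, (L v).coeff 0 = 1)
    (hstrat : ∀ i : ℕ, 1 ≤ i → (stratSet L i).Finite)
    (N D : Polynomial F) (hN0 : N.coeff 0 = 1) (hD0 : D.coeff 0 = 1) (n₁ : ℕ) :
    letI : TopologicalSpace F := ⊥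
    letI : TopologicalSpace (PowerSeries F) := Pi.topologicalSpace
    (∏' v : V, (↑(L v) : PowerSeries F)⁻¹) = (↑N : PowerSeries F) * (↑D : PowerSeries F)⁻¹ →
      ∀ k ≤ n₁,
        N.coeff k
          = PowerSeries.coeff k
              ((↑D : PowerSeries F)
                * ∏ i ∈ Finset.Icc 1 n₁, ∏ᶠ v ∈ stratSet L i, (↑(L v) : PowerSeries F)⁻¹) := by
  classical
  letI : TopologicalSpace F := ⊥
  letI : TopologicalSpace (PowerSeries F) := Pi.topologicalSpace
  haveI : DiscreteTopology F := ⟨Iff.rfl.mpr rfl⟩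
  intro hL k hk
  set f : V → PowerSeries F := fun v => (↑(L v) : PowerSeries F)⁻¹ with hf
  -- basic facts about coefficients of `L v`
  have hc0 : ∀ v, PowerSeries.constantCoeff (↑(L v) : PowerSeries F) = 1 := by
    intro v
    rw [← PowerSeries.coeff_zero_eq_constantCoeff, Polynomial.coeff_coe]
    exact hconst v
  -- strata as finsets
  set SF : ℕ → Finset V := fun i => if h : 1 ≤ i then (hstrat i h).toFinset else ∅ with hSFdef
  have hSFmem : ∀ i, 1 ≤ i → ∀ v, v ∈ SF i ↔ v ∈ stratSet L i := by
    intro i hi v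
    simp [hSFdef, hi, Set.Finite.mem_toFinset]
  set S : ℕ → Finset V := fun m => (Finset.Icc 1 m).biUnion SF with hSdef
  -- vanishing outside the strata
  have hnotin : ∀ (m : ℕ) (v : V), v ∉ S m → ∀ j : ℕ, 1 ≤ j → j ≤ m → (L v).coeff j = 0 := by
    intro m v hv j hj1 hjm
    by_contra hne
    have hP : ∃ j : ℕ, 1 ≤ j ∧ j ≤ m ∧ (L v).coeff j ≠ 0 := ⟨j, hj1, hjm, hne⟩
    set j₀ := Nat.find hP with hj₀
    obtain ⟨h1, h2, h3⟩ := Nat.find_spec hP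
    have hvmem : v ∈ stratSet L j₀ := by
      refine ⟨h3, fun j' hj'1 hj'lt => ?_⟩
      by_contra hne'
      exact Nat.find_min hP hj'lt ⟨hj'1, le_trans (le_of_lt hj'lt) h2, hne'⟩
    apply hv
    refine Finset.mem_biUnion.mpr ⟨j₀, Finset.mem_Icc.mpr ⟨h1, h2⟩, ?_⟩
    exact (hSFmem j₀ h1 v).mpr hvmem
  -- each factor outside the strata is trivial mod T^(m+1)
  have htriv : ∀ (m : ℕ) (v : V), v ∉ S m → EqTrunc m (f v) 1 := by
    intro m v hv
    refine inv_eqTrunc_one _ (hc0 v) fun j hj1 hjm => ?_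
    rw [Polynomial.coeff_coe]
    exact hnotin m v hv j hj1 hjm
  -- stabilization of partial products
  have hstab : ∀ (m : ℕ) (T : Finset V), S m ⊆ T →
      EqTrunc m (∏ v ∈ T, f v) (∏ v ∈ S m, f v) := by
    intro m T hsub
    rw [← Finset.prod_sdiff hsub]
    have h1 : EqTrunc m (∏ v ∈ T \ S m, f v) 1 :=
      EqTrunc.prod_one fun v hv => htriv m v (Finset.mem_sdiff.mp hv).2
    have := h1.mul (EqTrunc.refl (∏ v ∈ S m, f v))
    rwa [one_mul] at this
  -- candidate limit
  set P : PowerSeries F := PowerSeries.mk (fun m => PowerSeries.coeff m (∏ v ∈ S m, f v))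
    with hPdef
  have hSmono : ∀ {m m' : ℕ}, m ≤ m' → S m ⊆ S m' := by
    intro m m' hmm
    apply Finset.biUnion_subset_biUnion_of_subset_left
    exact Finset.Icc_subset_Icc_right hmm
  have hPcoeff : ∀ (m j : ℕ), j ≤ m → PowerSeries.coeff j P
      = PowerSeries.coeff j (∏ v ∈ S m, f v) := by
    intro m j hjm
    rw [hPdef, PowerSeries.coeff_mk]
    exact (hstab j (S m) (hSmono hjm) j le_rfl).symm
  -- HasProd f P
  have hHP : HasProd f P := by
    rw [HasProd, SummationFilter.unconditional_filter]
    refine tendsto_pi_nhds.mpr ?_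
    intro d
    have hd : d = Finsupp.single () (d ()) := Finsupp.unique_single d
    rw [nhds_discrete, Filter.tendsto_pure]
    rw [Filter.eventually_atTop]
    refine ⟨S (d ()), fun T hT => ?_⟩
    have h1 : PowerSeries.coeff (d ()) (∏ v ∈ T, f v)
        = PowerSeries.coeff (d ()) (∏ v ∈ S (d ()), f v) := hstab (d ()) T hT (d ()) le_rfl
    have h2 : PowerSeries.coeff (d ()) P
        = PowerSeries.coeff (d ()) (∏ v ∈ S (d ()), f v) := hPcoeff (d ()) (d ()) le_rfl
    have hcoe : ∀ g : PowerSeries F, g d = PowerSeries.coeff (d ()) g := by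
      intro g
      conv_lhs => rw [hd]
      rfl
    exact (hcoe _).trans (h1.trans (h2.symm.trans (hcoe P).symm))
  -- hence the tprod is P (coefficient-wise)
  have hMul : Multipliable f := ⟨P, hHP⟩
  have hHP' : HasProd f (∏' v, f v) := hMul.hasProd
  have htpcoeff : ∀ j : ℕ, PowerSeries.coeff j (∏' v, f v) = PowerSeries.coeff j P := by
    intro j
    set d : Unit →₀ ℕ := Finsupp.single () j with hddef
    have hcoe : ∀ g : PowerSeries F, g d = PowerSeries.coeff j g := fun g => rfl
    have e1 := tendsto_pi_nhds.mp hHP d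
    have e2 := tendsto_pi_nhds.mp hHP' d
    rw [nhds_discrete, Filter.tendsto_pure] at e1 e2
    obtain ⟨T, hT1, hT2⟩ := (e1.and e2).exists
    rw [← hcoe, ← hcoe, ← hT1, ← hT2]
  -- rewrite the statement
  have hDne : PowerSeries.constantCoeff (↑D : PowerSeries F) ≠ 0 := by
    rw [← PowerSeries.coeff_zero_eq_constantCoeff, Polynomial.coeff_coe, hD0]
    exact one_ne_zero
  have htpP : (∏' v, f v) = P := PowerSeries.ext htpcoeff
  have hND : (↑N : PowerSeries F) = (↑D : PowerSeries F) * P := by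
    have h1 : ((↑D : PowerSeries F))⁻¹ * ↑D = 1 := PowerSeries.inv_mul_cancel _ hDne
    calc (↑N : PowerSeries F) = ↑N * (((↑D : PowerSeries F))⁻¹ * ↑D) := by rw [h1, mul_one]
      _ = ↑D * (↑N * ((↑D : PowerSeries F))⁻¹) := by ring
      _ = ↑D * P := by rw [← hL, htpP]
  -- the finite product over the strata equals the product over `S n₁`
  have hdisj : ∀ i ∈ Finset.Icc 1 n₁, ∀ i' ∈ Finset.Icc 1 n₁, i ≠ i' →
      Disjoint (SF i) (SF i') := by
    intro i hi i' hi' hne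
    rw [Finset.disjoint_left]
    intro v hvi hvi'
    rw [Finset.mem_Icc] at hi hi'
    rcases lt_or_gt_of_ne hne with hlt | hlt
    · exact ((hSFmem i hi.1 v).mp hvi).1 (((hSFmem i' hi'.1 v).mp hvi').2 i hi.1 hlt)
    · exact ((hSFmem i' hi'.1 v).mp hvi').1 (((hSFmem i hi.1 v).mp hvi).2 i' hi'.1 hlt)
  have hbig : (∏ i ∈ Finset.Icc 1 n₁, ∏ᶠ v ∈ stratSet L i, f v) = ∏ v ∈ S n₁, f v := by
    rw [hSdef, Finset.prod_biUnion hdisj]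
    refine Finset.prod_congr rfl fun i hi => ?_
    have hi1 : 1 ≤ i := (Finset.mem_Icc.mp hi).1
    rw [finprod_mem_eq_finite_toFinset_prod f (hstrat i hi1)]
    refine (Finset.prod_congr ?_ fun _ _ => rfl)
    ext v
    rw [hSFmem i hi1 v, Set.Finite.mem_toFinset]
  have hfinal : EqTrunc n₁ ((↑D : PowerSeries F) * P)
      ((↑D : PowerSeries F) * ∏ v ∈ S n₁, f v) :=
    (EqTrunc.refl (↑D : PowerSeries F)).mul (fun j hj => hPcoeff n₁ j hj)
  rw [hbig.symm] at hfinal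
  rw [← Polynomial.coeff_coe, hND]
  exact hfinal k hk
end

section
/- Assume the functional-equation identity N(T)·D*(T) = ε·N*(T)·D(T) holds. Then for every k ∈ {0, …, n}: N_{n−k} = ε·Σ_{i=max(0, k−d)}^{k} c(N_i)·D_{d−(k−i)}·f^i − Σ_{i=1}^{min(d, k)} N_{n−(k−i)}·c(D_i)·f^i. -/
open Polynomial Finset

/-- `polyStar c f m P = Σ_{i=0}^{m} c(P_i)·f^i·T^(m−i)`. -/
noncomputable def polyStar {F : Type*} [Field F] (c : F →+* F) (f : F) (m : ℕ)
    (P : Polynomial F) : Polynomial F :=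
  ∑ i ∈ range (m + 1), C (c (P.coeff i) * f ^ i) * X ^ (m - i)

lemma coeff_mul_polyStar {F : Type*} [Field F] (c : F →+* F) (f : F) (m : ℕ)
    (P Q : Polynomial F) (t : ℕ) :
    (Q * polyStar c f m P).coeff t
      = ∑ i ∈ range (m + 1),
          if m - i ≤ t then c (P.coeff i) * f ^ i * Q.coeff (t - (m - i)) else 0 := by
  rw [polyStar, Finset.mul_sum, finset_sum_coeff]
  refine sum_congr rfl fun i _ => ?_
  rw [show Q * (C (c (P.coeff i) * f ^ i) * X ^ (m - i))
      = (C (c (P.coeff i) * f ^ i) * Q) * X ^ (m - i) by ring, coeff_mul_X_pow']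
  split_ifs with h
  · rw [coeff_C_mul]
  · rfl

/-- If the functional-equation identity `N(T)·D*(T) = ε·N*(T)·D(T)` holds, then for every
`k ∈ {0, …, n}`:
`N_{n−k} = ε·Σ_{i=max(0,k−d)}^{k} c(N_i)·D_{d−(k−i)}·f^i − Σ_{i=1}^{min(d,k)} N_{n−(k−i)}·c(D_i)·f^i`
(note that `Finset.Icc (k - d) k` with truncated subtraction realises
`{max(0, k−d), …, k}`). -/
theorem functional_equation_coeff_recursion
    {F : Type*} [Field F] (c : F →+* F) (f ε : F)
    (N D : Polynomial F) (n d : ℕ)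
    (hN0 : N.coeff 0 = 1) (hD0 : D.coeff 0 = 1)
    (hn : N.natDegree = n) (hd : D.natDegree = d)
    (hfe : N * polyStar c f d D = C ε * polyStar c f n N * D) :
    ∀ k ≤ n,
      N.coeff (n - k)
        = ε * ∑ i ∈ Icc (k - d) k, c (N.coeff i) * D.coeff (d - (k - i)) * f ^ i
          - ∑ i ∈ Icc 1 (min d k), N.coeff (n - (k - i)) * c (D.coeff i) * f ^ i := by
  intro k hk
  have hkey : (N * polyStar c f d D).coeff (n + d - k)
      = (C ε * polyStar c f n N * D).coeff (n + d - k) := by rw [hfe]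
  -- Left side: coefficient of N * D*
  have e1 : (N * polyStar c f d D).coeff (n + d - k)
      = N.coeff (n - k)
        + ∑ j ∈ Icc 1 (min d k), N.coeff (n - (k - j)) * c (D.coeff j) * f ^ j := by
    rw [coeff_mul_polyStar]
    have hsub : Icc 0 (min d k) ⊆ range (d + 1) := by
      intro x hx; simp only [mem_Icc, mem_range] at *; omega
    rw [← Finset.sum_subset hsub (fun j hj hj' => ?_)]
    · rw [show Icc 0 (min d k) = insert 0 (Icc 1 (min d k)) by ext x; simp; omega,
        Finset.sum_insert (by simp)]
      congr 1
      · rw [if_pos (by omega), show n + d - k - (d - 0) = n - k by omega]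
        simp [hD0]
      · refine sum_congr rfl fun j hj => ?_
        simp only [mem_Icc] at hj
        rw [if_pos (by omega), show n + d - k - (d - j) = n - (k - j) by omega]
        ring
    · -- j ∈ range (d+1), j ∉ Icc 0 (min d k), so j > min d k, i.e. j > k (as j ≤ d)
      simp only [mem_range, mem_Icc, not_and, not_le] at hj hj'
      have h1 : d ⊓ k < j := hj' (Nat.zero_le j)
      have hkj : k < j := by
        rcases min_lt_iff.mp h1 with h | h <;> omega
      rw [if_pos (by omega), show n + d - k - (d - j) = n - k + j by omega,
        Polynomial.coeff_eq_zero_of_natDegree_lt (show N.natDegree < n - k + j by omega),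
        mul_zero]
  -- Right side: coefficient of C ε * N* * D
  have e2 : (C ε * polyStar c f n N * D).coeff (n + d - k)
      = ε * ∑ i ∈ Icc (k - d) k, c (N.coeff i) * D.coeff (d - (k - i)) * f ^ i := by
    rw [mul_assoc, mul_comm (polyStar c f n N) D, ← mul_assoc, mul_assoc,
      coeff_C_mul, coeff_mul_polyStar]
    congr 1
    have hsub : Icc (k - d) k ⊆ range (n + 1) := by
      intro x hx; simp only [mem_Icc, mem_range] at *; omega
    rw [← Finset.sum_subset hsub (fun i hi hi' => ?_)]
    · refine sum_congr rfl fun i hi => ?_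
      simp only [mem_Icc] at hi
      rw [if_pos (by omega), show n + d - k - (n - i) = d - (k - i) by omega]
      ring
    · simp only [mem_range, mem_Icc] at hi hi'
      -- either i < k - d (condition fails) or i > k (D coefficient vanishes)
      by_cases hc : n - i ≤ n + d - k
      · have harith : n + d - k - (n - i) = d + i - k := by omega
        rw [if_pos hc, harith,
          Polynomial.coeff_eq_zero_of_natDegree_lt (show D.natDegree < d + i - k by omega),
          mul_zero]
      · rw [if_neg hc]
  rw [e1, e2] at hkey
  linear_combination hkey
end

section
/- Fix n ∈ ℕ, a polynomial D ∈ F[T] of degree d with constant coefficient 1, a ring homomorphism c : F → F, and f, ε ∈ F. Suppose N and N' are polynomials in F[T] of degree at most n with constant coefficient 1, each satisfying the identity P(T)·D*(T) = ε·P†(T)·D(T) (with P = N and P = N' respectively), where P†(T) := Σ_{i=0}^{n} c(P_i)·f^i·T^{n−i} and D*(T) := Σ_{j=0}^{d} c(D_j)·f^j·T^{d−j}. If N_i = N'_i for all i ∈ {0, …, ⌊n/2⌋}, then N = N'. In other words, a polynomial of degree at most n with constant coefficient 1 satisfying the functional-equation identity is uniquely determined by ε, f, c, D, and its coefficients in degrees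 up to ⌊n/2⌋. -/
open Polynomial Finset

/-- Fix `n`, a polynomial `D` of degree `d` with constant coefficient `1`, a ring
homomorphism `c : F → F` and `f, ε ∈ F`. If `N` and `N'` are polynomials of degree at most
`n` with constant coefficient `1`, each satisfying the functional-equation identity
`P(T)·D*(T) = ε·P†(T)·D(T)` (with `P† = Σ_{i=0}^{n} c(P_i)·f^i·T^(n−i)`), and their
coefficients agree in all degrees up to `⌊n/2⌋`, then `N = N'`. -/
theorem functional_equation_uniqueness_of_numerator
    {F : Type*} [Field F] (c : F →+* F) (f ε : F)
    (n : ℕ) (D : Polynomial F) (d : ℕ)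
    (hD0 : D.coeff 0 = 1) (hd : D.natDegree = d)
    (N N' : Polynomial F)
    (hNdeg : N.natDegree ≤ n) (hN'deg : N'.natDegree ≤ n)
    (hN0 : N.coeff 0 = 1) (hN'0 : N'.coeff 0 = 1)
    (hfe : N * polyStar c f d D = C ε * polyStar c f n N * D)
    (hfe' : N' * polyStar c f d D = C ε * polyStar c f n N' * D)
    (hcoeff : ∀ i ≤ n / 2, N.coeff i = N'.coeff i) :
    N = N' := by
  by_contra hne
  set M := N - N' with hM
  have hMne : M ≠ 0 := sub_ne_zero.mpr hne
  have hMcoeff : ∀ i ≤ n / 2, M.coeff i = 0 := by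
    intro i hi
    simp [hM, Polynomial.coeff_sub, hcoeff i hi]
  -- polyStar is additive in P
  have hstar : polyStar c f n M = polyStar c f n N - polyStar c f n N' := by
    rw [polyStar, polyStar, polyStar, ← Finset.sum_sub_distrib]
    refine Finset.sum_congr rfl fun i _ => ?_
    rw [hM, Polynomial.coeff_sub, map_sub, sub_mul, C_sub, sub_mul]
  -- functional equation for M
  have hMfe : M * polyStar c f d D = C ε * polyStar c f n M * D := by
    rw [hstar, hM]
    linear_combination hfe - hfe'
  -- D* is monic of degree d
  have h1 : (polyStar c f d D).coeff d = 1 := by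
    rw [polyStar, Polynomial.finset_sum_coeff,
      Finset.sum_eq_single 0 (fun i hi hne0 => ?_) (by simp)]
    · simp [hD0]
    · rw [Polynomial.coeff_C_mul, Polynomial.coeff_X_pow, if_neg (by
        simp only [Finset.mem_range] at hi; omega), mul_zero]
  have h2 : (polyStar c f d D).natDegree ≤ d := by
    refine Polynomial.natDegree_sum_le_of_forall_le _ _ fun i hi => ?_
    exact (Polynomial.natDegree_C_mul_X_pow_le _ _).trans (by omega)
  have hDs : (polyStar c f d D).Monic :=
    Polynomial.monic_of_natDegree_le_of_coeff_eq_one d h2 h1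
  have hDsdeg : (polyStar c f d D).natDegree = d :=
    le_antisymm h2 (Polynomial.le_natDegree_of_ne_zero (by rw [h1]; exact one_ne_zero))
  -- M† has small degree
  have h3 : (polyStar c f n M).natDegree ≤ n / 2 := by
    refine Polynomial.natDegree_sum_le_of_forall_le _ _ fun i hi => ?_
    by_cases h : i ≤ n / 2
    · simp [hMcoeff i h]
    · exact (Polynomial.natDegree_C_mul_X_pow_le _ _).trans (by omega)
  -- M has large degree
  have h4 : n / 2 < M.natDegree := by
    by_contra h
    push_neg at h
    exact hMne (Polynomial.leadingCoeff_eq_zero.mp (hMcoeff _ h))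
  -- compare degrees
  have hL : (M * polyStar c f d D).natDegree = M.natDegree + d := by
    rw [Polynomial.natDegree_mul hMne hDs.ne_zero, hDsdeg]
  have hR : (C ε * polyStar c f n M * D).natDegree ≤ n / 2 + d := by
    calc (C ε * polyStar c f n M * D).natDegree
        ≤ (C ε * polyStar c f n M).natDegree + D.natDegree :=
          Polynomial.natDegree_mul_le
      _ ≤ (C ε).natDegree + (polyStar c f n M).natDegree + D.natDegree :=
          Nat.add_le_add_right Polynomial.natDegree_mul_le _
      _ ≤ n / 2 + d := by rw [Polynomial.natDegree_C, hd]; omega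
  rw [hMfe] at hL
  omega
end

section
/- Assume the functional-equation identity N(T)·D*(T) = ε·N*(T)·D(T) holds. Then ε·c(ε)·f^n = f^d. In particular, if f ≠ 0, then ε·c(ε) = f^{d−n}. (This is the abstract form of the statement that the modulus of the global ε-factor of a self-dual representation of weight w is q^{(n−d)(w+1)/2}, taking f = q^{−(w+1)} and c complex conjugation.) -/
open Polynomial Finset

lemma polyStar_coeff_zero {F : Type*} [Field F] (c : F →+* F) (f : F) (m : ℕ)
    (P : Polynomial F) : (polyStar c f m P).coeff 0 = c (P.coeff m) * f ^ m := by
  rw [polyStar, finset_sum_coeff]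
  rw [Finset.sum_eq_single_of_mem m (by simp)]
  · simp only [Nat.sub_self, pow_zero, mul_one, coeff_C_mul, coeff_C, if_true]
  · intro i hi hne
    have h : 0 < m - i := Nat.sub_pos_of_lt (lt_of_le_of_ne (Nat.lt_succ_iff.mp (mem_range.mp hi)) hne)
    rw [coeff_C_mul, coeff_X_pow, if_neg (by omega : ¬ (0 = m - i)), mul_zero]

lemma polyStar_coeff_top {F : Type*} [Field F] (c : F →+* F) (f : F) (m : ℕ)
    (P : Polynomial F) : (polyStar c f m P).coeff m = c (P.coeff 0) := by
  rw [polyStar, finset_sum_coeff]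
  rw [Finset.sum_eq_single_of_mem 0 (by simp)]
  · simp
  · intro i hi hne
    have h1 : i ≤ m := Nat.lt_succ_iff.mp (mem_range.mp hi)
    have h2 : m ≠ m - i := by omega
    rw [coeff_C_mul, coeff_X_pow, if_neg (by omega : ¬ (m = m - i)), mul_zero]

lemma polyStar_natDegree_le {F : Type*} [Field F] (c : F →+* F) (f : F) (m : ℕ)
    (P : Polynomial F) : (polyStar c f m P).natDegree ≤ m := by
  refine natDegree_sum_le_of_forall_le _ _ fun i hi => ?_
  refine (natDegree_C_mul_le _ _).trans ?_
  simp only [natDegree_X_pow]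
  omega

lemma polyStar_natDegree {F : Type*} [Field F] (c : F →+* F) (f : F) (m : ℕ)
    (P : Polynomial F) (hP : P.coeff 0 = 1) : (polyStar c f m P).natDegree = m := by
  refine le_antisymm (polyStar_natDegree_le c f m P) ?_
  refine le_natDegree_of_ne_zero ?_
  rw [polyStar_coeff_top, hP, map_one]
  exact one_ne_zero

/-- If the functional-equation identity `N(T)·D*(T) = ε·N*(T)·D(T)` holds, then
`ε·c(ε)·f^n = f^d`; in particular, if `f ≠ 0`, then `ε·c(ε) = f^(d−n)` (an integer power). -/
theorem functional_equation_epsilon_modulus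
    {F : Type*} [Field F] (c : F →+* F) (f ε : F)
    (N D : Polynomial F) (n d : ℕ)
    (hN0 : N.coeff 0 = 1) (hD0 : D.coeff 0 = 1)
    (hn : N.natDegree = n) (hd : D.natDegree = d)
    (hfe : N * polyStar c f d D = C ε * polyStar c f n N * D) :
    ε * c ε * f ^ n = f ^ d ∧ (f ≠ 0 → ε * c ε = f ^ ((d : ℤ) - (n : ℤ))) := by
  have hNne : N ≠ 0 := fun h => by simp [h] at hN0
  have hDne : D ≠ 0 := fun h => by simp [h] at hD0
  have hDd : D.coeff d ≠ 0 := by rw [← hd]; exact (leadingCoeff_ne_zero.mpr hDne)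
  -- coefficient 0
  have h0 : c (D.coeff d) * f ^ d = ε * (c (N.coeff n) * f ^ n) := by
    have := congrArg (fun p => Polynomial.coeff p 0) hfe
    simpa [mul_coeff_zero, polyStar_coeff_zero, hN0, hD0, coeff_C] using this
  -- top coefficient
  have htop : N.coeff n = ε * D.coeff d := by
    have := congrArg (fun p => Polynomial.coeff p (n + d)) hfe
    simp only [mul_assoc, coeff_C_mul] at this
    rw [show (N * polyStar c f d D).coeff (n + d)
          = N.leadingCoeff * (polyStar c f d D).leadingCoeff by
        rw [← coeff_mul_degree_add_degree, hn, polyStar_natDegree c f d D hD0]] at this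
    rw [show (polyStar c f n N * D).coeff (n + d)
          = (polyStar c f n N).leadingCoeff * D.leadingCoeff by
        rw [← coeff_mul_degree_add_degree, hd, polyStar_natDegree c f n N hN0]] at this
    rw [leadingCoeff, leadingCoeff, leadingCoeff, leadingCoeff, hn, hd,
      polyStar_natDegree c f d D hD0, polyStar_natDegree c f n N hN0,
      polyStar_coeff_top, polyStar_coeff_top, hN0, hD0] at this
    simpa using this
  have hcN : c (N.coeff n) = c ε * c (D.coeff d) := by rw [htop, map_mul]
  have hkey : ε * c ε * f ^ n = f ^ d := by
    have hcDd : c (D.coeff d) ≠ 0 := fun h => hDd (by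
      have := c.injective (h.trans (map_zero c).symm); exact this)
    rw [hcN] at h0
    refine mul_left_cancel₀ hcDd ?_
    linear_combination -h0
  refine ⟨hkey, fun hf => ?_⟩
  have hfn : f ^ n ≠ 0 := pow_ne_zero _ hf
  rw [zpow_sub₀ hf, zpow_natCast, zpow_natCast, eq_div_iff hfn]
  exact hkey
end
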